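/- Let F_n and F be CDFs on ℝ², let K: ℝ² → ℝ be continuously differentiable with integrable partial derivatives K₁, K₂, and suppose the signed measure d(F_n − F) admits integration by parts. Then for h > 0: ∫_{ℝ²} |∫ K((x−y)/h) d(F_n − F)(y)| dx ≤ Σ_{i=1,2} h ‖K_i‖_{L¹} ‖F_n − F‖_{L¹}, where ‖F_n − F‖_{L¹} = ∫ |F_n(t) − F(t)| dt. -/
import Mathlib


open MeasureTheory Convolution

section aux

private lemma aux_conv (Kc : ℝ × ℝ → ℝ) (hKi : Integrable Kc)
    (f : ℝ × ℝ → ℝ) (hf : Integrable f) (h : ℝ) (hh : 0 < h) :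
    Integrable (f ⋆[ContinuousLinearMap.mul ℝ ℝ] fun x => h⁻¹ * Kc (h⁻¹ • x)) ∧
    (∫ x, |(f ⋆[ContinuousLinearMap.mul ℝ ℝ] fun x => h⁻¹ * Kc (h⁻¹ • x)) x|) ≤
      h * (∫ z, |Kc z|) * ∫ t, |f t| := by
  set g : ℝ × ℝ → ℝ := fun x => h⁻¹ * Kc (h⁻¹ • x) with hgdef
  have hg : Integrable g := ((hKi.comp_smul (inv_ne_zero hh.ne')).const_mul h⁻¹)
  have hconv : Integrable (f ⋆[ContinuousLinearMap.mul ℝ ℝ] g) :=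
    hf.integrable_convolution _ hg
  refine ⟨hconv, ?_⟩
  have habs : Integrable ((fun x => |f x|) ⋆[ContinuousLinearMap.mul ℝ ℝ] fun x => |g x|) :=
    hf.abs.integrable_convolution _ hg.abs
  have key : (∫ x, |(f ⋆[ContinuousLinearMap.mul ℝ ℝ] g) x|) ≤
      ∫ x, ((fun x => |f x|) ⋆[ContinuousLinearMap.mul ℝ ℝ] fun x => |g x|) x := by
    refine integral_mono hconv.abs habs fun x => ?_
    calc |(f ⋆[ContinuousLinearMap.mul ℝ ℝ] g) x| ≤ ∫ t, |f t| * |g (x - t)| := by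
          simpa [convolution, abs_mul] using
            norm_integral_le_integral_norm (μ := (volume : Measure (ℝ × ℝ)))
              (fun t => f t * g (x - t))
      _ = _ := by simp [convolution]
  refine key.trans_eq ?_
  rw [integral_convolution _ hf.abs hg.abs]
  have hgint : (∫ x, |g x|) = h * ∫ z, |Kc z| := by
    have : (∫ x, |g x|) = h⁻¹ * ∫ x, |Kc (h⁻¹ • x)| := by
      simp only [hgdef, abs_mul, abs_of_pos (inv_pos.2 hh)]
      rw [integral_const_mul]
    rw [this, Measure.integral_comp_inv_smul volume (fun z => |Kc z|) h]
    have h2 : Module.finrank ℝ (ℝ × ℝ) = 2 := by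
      simp [Module.finrank_prod]
    rw [h2, abs_of_pos (pow_pos hh 2), smul_eq_mul]
    have hne := hh.ne'
    field_simp
  simp only [ContinuousLinearMap.mul_apply']
  rw [hgint]; ring

end aux

/-- key estimate of Lemma pl2: if `K : ℝ² → ℝ` is continuously
differentiable with integrable partial derivatives `K₁, K₂`, and integration by parts is
available for the signed measure `d(F_n − F)` — i.e. the function
`G(x) = ∫ K((x−y)/h) d(F_n−F)(y)` can be written as
`G(x) = Σᵢ ∫ h⁻¹ Kᵢ((x−y)/h)(F_n(y) − F(y)) dy` — then
`∫ |G(x)| dx ≤ Σᵢ h ‖Kᵢ‖_{L¹} ‖F_n − F‖_{L¹}`. -/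
theorem stmt18
    (K : ℝ × ℝ → ℝ) (hK : ContDiff ℝ 1 K)
    (K₁ K₂ : ℝ × ℝ → ℝ)
    (hK₁ : ∀ x, K₁ x = fderiv ℝ K x (1, 0))
    (hK₂ : ∀ x, K₂ x = fderiv ℝ K x (0, 1))
    (hK₁i : Integrable K₁) (hK₂i : Integrable K₂)
    (Fn F : ℝ × ℝ → ℝ)
    (hFi : Integrable (fun t => Fn t - F t))
    (h : ℝ) (hh : 0 < h)
    (G : ℝ × ℝ → ℝ)
    (hG : ∀ x, G x =
      (∫ y, h⁻¹ * K₁ (h⁻¹ • (x - y)) * (Fn y - F y)) +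
      (∫ y, h⁻¹ * K₂ (h⁻¹ • (x - y)) * (Fn y - F y))) :
    (∫ x, |G x|) ≤
      h * ((∫ z, |K₁ z|) + (∫ z, |K₂ z|)) * ∫ t, |Fn t - F t| := by
  set f : ℝ × ℝ → ℝ := fun t => Fn t - F t with hf
  obtain ⟨hA, hAle⟩ := aux_conv K₁ hK₁i f hFi h hh
  obtain ⟨hB, hBle⟩ := aux_conv K₂ hK₂i f hFi h hh
  set A := f ⋆[ContinuousLinearMap.mul ℝ ℝ] fun x => h⁻¹ * K₁ (h⁻¹ • x) with hAdef
  set B := f ⋆[ContinuousLinearMap.mul ℝ ℝ] fun x => h⁻¹ * K₂ (h⁻¹ • x) with hBdef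
  have hGx : ∀ x, G x = A x + B x := by
    intro x
    rw [hG x, hAdef, hBdef]
    simp only [convolution, ContinuousLinearMap.mul_apply']
    congr 1 <;> exact integral_congr_ae (Filter.Eventually.of_forall fun y => by ring)
  have h1 : (∫ x, |G x|) ≤ ∫ x, (|A x| + |B x|) := by
    rw [show (fun x => |G x|) = fun x => |A x + B x| from funext fun x => by rw [hGx x]]
    exact integral_mono (hA.add hB).abs (hA.abs.add hB.abs) fun x => abs_add_le _ _
  rw [integral_add hA.abs hB.abs] at h1
  calc (∫ x, |G x|) ≤ (∫ x, |A x|) + ∫ x, |B x| := h1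
    _ ≤ h * (∫ z, |K₁ z|) * (∫ t, |f t|) + h * (∫ z, |K₂ z|) * (∫ t, |f t|) :=
        add_le_add hAle hBle
    _ = h * ((∫ z, |K₁ z|) + (∫ z, |K₂ z|)) * ∫ t, |f t| := by ring
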